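/- Let q be a positive integer and χ a non-principal Dirichlet character modulo q. Suppose that for every ε > 0 there exists a constant K_ε > 0 such that |∑_{n=1}^{N} χ(p_n)| ≤ K_ε · N^{1/2+ε} for all N ≥ 1, where p_n denotes the n-th prime. Then L(s,χ) ≠ 0 for every s ∈ ℂ with Re(s) > 1/2. -/

import Mathlib

/-!
For `Re s > 1` the Euler product gives `L(s, χ) = exp (P(s) + R(s))`, where
`P(s) = ∑ₚ χ(p) p^(-s)` and `R(s) = ∑ₚ (-log (1 - χ(p) p^(-s)) - χ(p) p^(-s))`.
The terms of `R` are `O(p^(-2σ))`, so `R` is holomorphic on `Re s > 1/2`. Partial summation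
against the bound `∑_{n<N} χ(pₙ) = O(N^(1/2+ε))` rewrites `P` as a series that converges
absolutely and locally uniformly on `Re s > 1/2 + ε`. Hence `exp (P + R)` is holomorphic and
zero-free on `Re s > 1/2`, and by the identity theorem it equals the entire function `L(s, χ)`.
-/

open Finset Complex Filter Topology DirichletCharacter

noncomputable section

theorem norm_ofReal_add_one_cpow_neg_sub_le {x : ℝ} (hx : 0 < x) {s : ℂ} (hs : -1 ≤ s.re) :
    ‖((x + 1 : ℝ) : ℂ) ^ (-s) - (x : ℂ) ^ (-s)‖ ≤ ‖s‖ * x ^ (-s.re - 1) := by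
  rcases eq_or_ne s 0 with rfl | hs0
  · simp
  have hderiv : ∀ t ∈ Set.Icc x (x + 1), HasDerivWithinAt (fun y : ℝ => (y : ℂ) ^ (-s))
      (-s * (t : ℂ) ^ (-s - 1)) (Set.Icc x (x + 1)) t := fun t ht =>
    (hasDerivAt_ofReal_cpow_const (hx.trans_le ht.1).ne' (neg_ne_zero.mpr hs0)).hasDerivWithinAt
  have hbound : ∀ t ∈ Set.Icc x (x + 1),
      ‖-s * (t : ℂ) ^ (-s - 1)‖ ≤ ‖s‖ * x ^ (-s.re - 1) := by
    intro t ht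
    rw [norm_mul, norm_neg, norm_cpow_eq_rpow_re_of_pos (hx.trans_le ht.1)]
    gcongr
    simpa using Real.rpow_le_rpow_of_nonpos hx ht.1 (by simp; linarith)
  simpa using (convex_Icc x (x + 1)).norm_image_sub_le_of_norm_hasDerivWithin_le hderiv hbound
    (Set.left_mem_Icc.2 (by linarith)) (Set.right_mem_Icc.2 (by linarith))

theorem sum_range_mul_by_parts {R : Type*} [CommRing R] (c f : ℕ → R) (M : ℕ) :
    ∑ m ∈ range M, c m * f m = (∑ m ∈ range M, c m) * f M
      - ∑ m ∈ range M, (∑ k ∈ range (m + 1), c k) * (f (m + 1) - f m) := by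
  induction M with
  | zero => simp
  | succ M ih => simp only [sum_range_succ, ih]; ring

section AbelDirichletSeries

variable (c : ℕ → ℂ)

def abelSummand (s : ℂ) (m : ℕ) : ℂ :=
  (∑ k ∈ range (m + 1), c k) * (((m + 1 + 1 : ℕ) : ℂ) ^ (-s) - ((m + 1 : ℕ) : ℂ) ^ (-s))

/-- The Dirichlet series `∑ c m (m + 1)^(-s)` after partial summation. To the left of its
abscissa of absolute convergence the original series is not `Summable`, so its `tsum` is junk;
this one converges absolutely wherever the partial sums of `c` are `O(M^α)` with `α < Re s`. -/
def abelDirichletSeries (s : ℂ) : ℂ := -∑' m, abelSummand c s m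

variable {c} {K α : ℝ}

theorem norm_abelSummand_le (hc : ∀ M : ℕ, ‖∑ m ∈ range M, c m‖ ≤ K * (M : ℝ) ^ α)
    {σ R : ℝ} {s : ℂ} (hσ : -1 ≤ σ) (hσs : σ ≤ s.re) (hsR : ‖s‖ ≤ R) (m : ℕ) :
    ‖abelSummand c s m‖ ≤ K * R * ((m + 1 : ℕ) : ℝ) ^ (α - σ - 1) := by
  have hm : (1 : ℝ) ≤ ((m + 1 : ℕ) : ℝ) := by exact_mod_cast Nat.le_add_left 1 m
  have hK : 0 ≤ K := by simpa using (norm_nonneg _).trans (hc 1)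
  have hdiff : ‖((m + 1 + 1 : ℕ) : ℂ) ^ (-s) - ((m + 1 : ℕ) : ℂ) ^ (-s)‖
      ≤ R * ((m + 1 : ℕ) : ℝ) ^ (-σ - 1) := by
    have := norm_ofReal_add_one_cpow_neg_sub_le (x := ((m + 1 : ℕ) : ℝ)) (by positivity)
      (hσ.trans hσs)
    push_cast at this ⊢
    refine this.trans (mul_le_mul hsR ?_ (by positivity) ((norm_nonneg s).trans hsR))
    exact Real.rpow_le_rpow_of_exponent_le (by exact_mod_cast hm) (by linarith)
  calc ‖abelSummand c s m‖
      ≤ K * ((m + 1 : ℕ) : ℝ) ^ α * (R * ((m + 1 : ℕ) : ℝ) ^ (-σ - 1)) := by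
        rw [abelSummand, norm_mul]
        exact mul_le_mul (hc _) hdiff (norm_nonneg _) (by positivity)
    _ = K * R * ((m + 1 : ℕ) : ℝ) ^ (α - σ - 1) := by
        rw [mul_mul_mul_comm, ← Real.rpow_add (by positivity)]
        ring_nf

theorem summable_natCast_add_one_rpow {p : ℝ} (hp : p < -1) :
    Summable fun m : ℕ => ((m + 1 : ℕ) : ℝ) ^ p :=
  (summable_nat_add_iff 1).mpr (Real.summable_nat_rpow.mpr hp)

theorem tendsto_sum_range_mul_cpow_abelDirichletSeries
    (hc : ∀ M : ℕ, ‖∑ m ∈ range M, c m‖ ≤ K * (M : ℝ) ^ α) (hα : 0 ≤ α)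
    {s : ℂ} (hs : α < s.re) :
    Tendsto (fun M => ∑ m ∈ range M, c m * ((m + 1 : ℕ) : ℂ) ^ (-s)) atTop
      (𝓝 (abelDirichletSeries c s)) := by
  have hsum : Summable (abelSummand c s) :=
    .of_norm_bounded ((summable_natCast_add_one_rpow (by linarith)).mul_left (K * ‖s‖))
      (norm_abelSummand_le hc (by linarith) le_rfl le_rfl)
  have hK : 0 ≤ K := by simpa using (norm_nonneg _).trans (hc 1)
  have hboundary : Tendsto (fun M => (∑ m ∈ range M, c m) * ((M + 1 : ℕ) : ℂ) ^ (-s)) atTop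
      (𝓝 0) := by
    refine squeeze_zero_norm (a := fun M : ℕ => K * ((M + 1 : ℕ) : ℝ) ^ (-(s.re - α)))
      (fun M => ?_) ?_
    · have hM : (0 : ℝ) < ((M + 1 : ℕ) : ℝ) := by positivity
      rw [norm_mul, norm_natCast_cpow_of_pos (Nat.succ_pos M), neg_re]
      calc ‖∑ m ∈ range M, c m‖ * ((M + 1 : ℕ) : ℝ) ^ (-s.re)
          ≤ K * ((M + 1 : ℕ) : ℝ) ^ α * ((M + 1 : ℕ) : ℝ) ^ (-s.re) := by
            gcongr
            exact (hc M).trans (by gcongr; exact_mod_cast M.le_succ)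
        _ = K * ((M + 1 : ℕ) : ℝ) ^ (-(s.re - α)) := by
            rw [mul_assoc, ← Real.rpow_add hM]
            ring_nf
    · have := ((tendsto_rpow_neg_atTop (by linarith : 0 < s.re - α)).comp
        (tendsto_natCast_atTop_atTop.comp (tendsto_add_atTop_nat 1))).const_mul K
      rw [mul_zero] at this
      exact this
  have := hboundary.sub hsum.hasSum.tendsto_sum_nat
  rw [zero_sub] at this
  refine this.congr fun M => ?_
  rw [sum_range_mul_by_parts c (fun m => ((m + 1 : ℕ) : ℂ) ^ (-s)) M]
  rfl

theorem differentiableAt_abelDirichletSeries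
    (hc : ∀ M : ℕ, ‖∑ m ∈ range M, c m‖ ≤ K * (M : ℝ) ^ α) (hα : 0 ≤ α)
    {s₀ : ℂ} (hs₀ : α < s₀.re) : DifferentiableAt ℂ (abelDirichletSeries c) s₀ := by
  obtain ⟨σ, hασ, hσs₀⟩ := exists_between hs₀
  set U := {s : ℂ | σ < s.re ∧ ‖s‖ < ‖s₀‖ + 1}
  have hU : IsOpen U :=
    (isOpen_lt continuous_const continuous_re).inter (isOpen_lt continuous_norm continuous_const)
  have hsummand (m : ℕ) : Differentiable ℂ fun s => abelSummand c s m := by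
    refine .const_mul (.sub ?_ ?_) _ <;>
      exact .const_cpow differentiable_neg (.inl (Nat.cast_ne_zero.mpr (Nat.succ_ne_zero _)))
  have hdiff : DifferentiableOn ℂ (abelDirichletSeries c) U :=
    (differentiableOn_tsum_of_summable_norm
      ((summable_natCast_add_one_rpow (by linarith)).mul_left (K * (‖s₀‖ + 1)))
      (fun m => (hsummand m).differentiableOn) hU
      (fun m s hs => norm_abelSummand_le hc (by linarith) hs.1.le hs.2.le m)).neg
  exact hdiff.differentiableAt (hU.mem_nhds ⟨by linarith, by linarith⟩)

end AbelDirichletSeries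

theorem sum_range_indicator_eq_sum_range_count {M : Type*} [AddCommMonoid M] (p : ℕ → Prop)
    [DecidablePred p] (f : ℕ → M) (n : ℕ) :
    ∑ k ∈ range n, {k | p k}.indicator f k
      = ∑ i ∈ range (Nat.count p n), f (Nat.nth p i) := by
  induction n with
  | zero => simp
  | succ n ih =>
    by_cases hn : p n
    · simp [sum_range_succ, ih, Nat.count_succ, hn, Nat.nth_count hn, Set.indicator_of_mem]
    · simp [sum_range_succ, ih, Nat.count_succ, hn, Set.indicator_of_notMem]

theorem norm_neg_log_one_sub_sub_self_le {w : ℂ} {r : ℝ} (hw : ‖w‖ ≤ r) (hr : r < 1) :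
    ‖-log (1 - w) - w‖ ≤ (1 - r)⁻¹ * ‖w‖ ^ 2 := by
  have h := norm_log_one_add_sub_self_le (z := -w) (by rw [norm_neg]; linarith)
  rw [norm_neg, ← sub_eq_add_neg, sub_neg_eq_add] at h
  rw [← norm_neg, neg_sub, sub_neg_eq_add, add_comm]
  refine h.trans ?_
  have : (1 - ‖w‖)⁻¹ ≤ (1 - r)⁻¹ := inv_anti₀ (by linarith) (by linarith)
  nlinarith [sq_nonneg ‖w‖, inv_nonneg.mpr (by linarith : (0 : ℝ) ≤ 1 - ‖w‖)]

section Primes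

def primeSeriesCoeff (f : ℕ → ℂ) (m : ℕ) : ℂ := {p : ℕ | p.Prime}.indicator f (m + 1)

variable {f : ℕ → ℂ}

theorem norm_sum_range_primeSeriesCoeff_le {K α : ℝ} (hK : 0 ≤ K) (hα : 0 ≤ α)
    (hf : ∀ N : ℕ, 1 ≤ N → ‖∑ n ∈ range N, f (Nat.nth Nat.Prime n)‖ ≤ K * (N : ℝ) ^ α)
    (M : ℕ) : ‖∑ m ∈ range M, primeSeriesCoeff f m‖ ≤ K * (M : ℝ) ^ α := by
  have hsum : ∑ m ∈ range M, primeSeriesCoeff f m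
      = ∑ n ∈ range (Nat.count Nat.Prime (M + 1)), f (Nat.nth Nat.Prime n) := by
    rw [← sum_range_indicator_eq_sum_range_count, sum_range_succ']
    simp [primeSeriesCoeff, Set.indicator_of_notMem, Nat.not_prime_zero]
  have hcount : Nat.count Nat.Prime (M + 1) ≤ M := by
    simpa [Nat.count_succ', Nat.not_prime_zero]
      using Nat.count_le (p := fun k => (k + 1).Prime)
  rw [hsum]
  rcases Nat.eq_zero_or_pos (Nat.count Nat.Prime (M + 1)) with h | h
  · rw [h, sum_range_zero, norm_zero]
    positivity
  · exact (hf _ h).trans (by gcongr)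

theorem tendsto_sum_range_primeSeriesCoeff_mul_cpow {s : ℂ}
    (hf : Summable fun p : Nat.Primes => f p * (p : ℂ) ^ (-s)) :
    Tendsto (fun M => ∑ m ∈ range M, primeSeriesCoeff f m * ((m + 1 : ℕ) : ℂ) ^ (-s)) atTop
      (𝓝 (∑' p : Nat.Primes, f p * (p : ℂ) ^ (-s))) := by
  set g : ℕ → ℂ := {p : ℕ | p.Prime}.indicator fun n => f n * (n : ℂ) ^ (-s)
  have hg : Summable g := summable_subtype_iff_indicator.mp hf
  have htsum : ∑' p : Nat.Primes, f p * (p : ℂ) ^ (-s) = ∑' n, g n :=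
    _root_.tsum_subtype {p : ℕ | p.Prime} fun n => f n * (n : ℂ) ^ (-s)
  have hshift (m : ℕ) : primeSeriesCoeff f m * ((m + 1 : ℕ) : ℂ) ^ (-s) = g (m + 1) :=
    (Set.indicator_mul_left (i := m + 1) _ f fun n : ℕ => (n : ℂ) ^ (-s)).symm
  have hg0 : g 0 = 0 := Set.indicator_of_notMem Nat.not_prime_zero _
  simp only [hshift, htsum, hg.tsum_eq_zero_add, hg0, zero_add]
  exact ((summable_nat_add_iff 1).mpr hg).hasSum.tendsto_sum_nat

def primeLogRemainder (f : ℕ → ℂ) (s : ℂ) : ℂ :=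
  ∑' p : Nat.Primes, (-log (1 - f p * (p : ℂ) ^ (-s)) - f p * (p : ℂ) ^ (-s))

theorem norm_mul_prime_cpow_le (hf : ∀ n, ‖f n‖ ≤ 1) (p : Nat.Primes) {σ : ℝ} {s : ℂ}
    (hσs : σ ≤ s.re) : ‖f p * (p : ℂ) ^ (-s)‖ ≤ (p : ℝ) ^ (-σ) := by
  rw [norm_mul, norm_natCast_cpow_of_pos p.prop.pos, neg_re]
  calc ‖f p‖ * (p : ℝ) ^ (-s.re) ≤ 1 * (p : ℝ) ^ (-σ) := by
        gcongr
        · exact hf p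
        · exact_mod_cast p.prop.one_lt.le
    _ = (p : ℝ) ^ (-σ) := one_mul _

theorem norm_primeLogRemainder_summand_le (hf : ∀ n, ‖f n‖ ≤ 1) (p : Nat.Primes) {σ : ℝ}
    (hσ : 0 < σ) {s : ℂ} (hσs : σ ≤ s.re) :
    ‖-log (1 - f p * (p : ℂ) ^ (-s)) - f p * (p : ℂ) ^ (-s)‖
      ≤ (1 - (2 : ℝ) ^ (-σ))⁻¹ * (p : ℝ) ^ (-(2 * σ)) := by
  have hw := norm_mul_prime_cpow_le hf p hσs
  have h2 : (p : ℝ) ^ (-σ) ≤ (2 : ℝ) ^ (-σ) :=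
    Real.rpow_le_rpow_of_nonpos two_pos (by exact_mod_cast p.prop.two_le) (by linarith)
  have h1 : (2 : ℝ) ^ (-σ) < 1 := Real.rpow_lt_one_of_one_lt_of_neg one_lt_two (by linarith)
  refine (norm_neg_log_one_sub_sub_self_le (hw.trans h2) h1).trans ?_
  rw [show -(2 * σ) = -σ * 2 by ring, Real.rpow_mul (Nat.cast_nonneg _), Real.rpow_two]
  gcongr

theorem differentiableAt_primeLogRemainder (hf : ∀ n, ‖f n‖ ≤ 1) {s₀ : ℂ}
    (hs₀ : 1 / 2 < s₀.re) : DifferentiableAt ℂ (primeLogRemainder f) s₀ := by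
  obtain ⟨σ, hσ, hσs₀⟩ := exists_between hs₀
  set U := {s : ℂ | σ < s.re}
  have hU : IsOpen U := isOpen_lt continuous_const continuous_re
  have hsummand (p : Nat.Primes) :
      DifferentiableOn ℂ (fun s => -log (1 - f p * (p : ℂ) ^ (-s)) - f p * (p : ℂ) ^ (-s))
        U := by
    have hw : Differentiable ℂ fun s : ℂ => f p * (p : ℂ) ^ (-s) :=
      .const_mul (.const_cpow differentiable_neg (.inl (Nat.cast_ne_zero.mpr p.prop.ne_zero))) _
    refine .sub (fun s hs => ?_) hw.differentiableOn
    have hlt : ‖f p * (p : ℂ) ^ (-s)‖ < 1 := (norm_mul_prime_cpow_le hf p hs.le).trans_lt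
      (Real.rpow_lt_one_of_one_lt_of_neg (by exact_mod_cast p.prop.one_lt) (by linarith))
    have hslit : 1 - f p * (p : ℂ) ^ (-s) ∈ slitPlane := by
      simpa [sub_eq_add_neg]
        using mem_slitPlane_of_norm_lt_one (z := -(f p * (p : ℂ) ^ (-s))) (by rwa [norm_neg])
    exact (((differentiableAt_const _).sub (hw s)).clog hslit).neg.differentiableWithinAt
  have hdiff : DifferentiableOn ℂ (primeLogRemainder f) U :=
    differentiableOn_tsum_of_summable_norm
      ((Nat.Primes.summable_rpow.mpr (by linarith)).mul_left (1 - (2 : ℝ) ^ (-σ))⁻¹)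
      hsummand hU (fun p s hs => norm_primeLogRemainder_summand_le hf p (by linarith) hs.le)
  exact hdiff.differentiableAt (hU.mem_nhds hσs₀)

end Primes

theorem LFunction_eq_exp_abelDirichletSeries_add_primeLogRemainder {q : ℕ} [NeZero q]
    (χ : DirichletCharacter ℂ q) {K α : ℝ}
    (hc : ∀ M : ℕ, ‖∑ m ∈ range M, primeSeriesCoeff (fun n : ℕ => χ n) m‖ ≤ K * (M : ℝ) ^ α)
    (hα : 0 ≤ α) (hα₁ : α ≤ 1) {s : ℂ} (hs : 1 < s.re) :
    LFunction χ s = exp (abelDirichletSeries (primeSeriesCoeff (fun n : ℕ => χ n)) s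
      + primeLogRemainder (fun n : ℕ => χ n) s) := by
  have hχ (n : ℕ) : ‖χ n‖ ≤ 1 := χ.norm_le_one n
  have hw : Summable fun p : Nat.Primes => χ p * (p : ℂ) ^ (-s) :=
    .of_norm_bounded (Nat.Primes.summable_rpow.mpr (neg_lt_neg hs))
      fun p => norm_mul_prime_cpow_le hχ p le_rfl
  have hR : Summable fun p : Nat.Primes =>
      -log (1 - χ p * (p : ℂ) ^ (-s)) - χ p * (p : ℂ) ^ (-s) :=
    .of_norm_bounded ((Nat.Primes.summable_rpow.mpr (by linarith)).mul_left _)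
      fun p => norm_primeLogRemainder_summand_le hχ p (by linarith) le_rfl
  have hF : abelDirichletSeries (primeSeriesCoeff (fun n : ℕ => χ n)) s
      = ∑' p : Nat.Primes, χ p * (p : ℂ) ^ (-s) :=
    tendsto_nhds_unique (tendsto_sum_range_mul_cpow_abelDirichletSeries hc hα (by linarith))
      (tendsto_sum_range_primeSeriesCoeff_mul_cpow hw)
  rw [LFunction_eq_LSeries χ hs, ← LSeries_eulerProduct_exp_log χ hs,
    hF, primeLogRemainder, ← hw.tsum_add hR]
  simp only [add_sub_cancel]

end

/-- If the character sums over primes of a non-principal Dirichlet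
character `χ` mod `q` grow like `O(N^(1/2+ε))` for every `ε > 0`, then the Dirichlet
L-function of `χ` has no zeros with real part greater than `1/2`. -/
theorem lfunction_ne_zero_of_prime_char_sum_sqrt_bound
    (q : ℕ) [NeZero q] (χ : DirichletCharacter ℂ q) (hχ : χ ≠ 1)
    (hbound : ∀ ε : ℝ, 0 < ε → ∃ K : ℝ, 0 < K ∧ ∀ N : ℕ, 1 ≤ N →
      ‖∑ n ∈ Finset.range N, χ (Nat.nth Nat.Prime n)‖ ≤ K * (N : ℝ) ^ ((1 : ℝ) / 2 + ε)) :
    ∀ s : ℂ, 1 / 2 < s.re → DirichletCharacter.LFunction χ s ≠ 0 := by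
  set c := primeSeriesCoeff fun n : ℕ => χ n
  have hc (ε : ℝ) (hε : 0 < ε) :
      ∃ K : ℝ, ∀ M : ℕ, ‖∑ m ∈ range M, c m‖ ≤ K * (M : ℝ) ^ ((1 : ℝ) / 2 + ε) :=
    let ⟨K, hK, hKN⟩ := hbound ε hε
    ⟨K, norm_sum_range_primeSeriesCoeff_le hK.le (by positivity) hKN⟩
  set G := fun s => exp (abelDirichletSeries c s + primeLogRemainder (fun n : ℕ => χ n) s)
  have hG : DifferentiableOn ℂ G {s | 1 / 2 < s.re} := fun s (hs : 1 / 2 < s.re) => by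
    obtain ⟨K, hK⟩ := hc ((s.re - 1 / 2) / 2) (by linarith)
    refine DifferentiableAt.differentiableWithinAt (.cexp (.add ?_ ?_))
    · exact differentiableAt_abelDirichletSeries hK (by linarith) (by linarith)
    · exact differentiableAt_primeLogRemainder (fun n => χ.norm_le_one n) hs
  have hLG : ∀ᶠ s in 𝓝 (2 : ℂ), LFunction χ s = G s := by
    obtain ⟨K, hK⟩ := hc (1 / 4) (by norm_num)
    filter_upwards [(isOpen_lt continuous_const continuous_re).mem_nhds
      (show (1 : ℝ) < (2 : ℂ).re by norm_num)] with s hs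
    exact LFunction_eq_exp_abelDirichletSeries_add_primeLogRemainder χ hK (by norm_num)
      (by norm_num) hs
  have hU : IsOpen {s : ℂ | 1 / 2 < s.re} := isOpen_lt continuous_const continuous_re
  intro s hs
  rw [((differentiable_LFunction hχ).differentiableOn.analyticOnNhd
    hU).eqOn_of_preconnected_of_eventuallyEq (hG.analyticOnNhd hU)
    (convex_halfSpace_re_gt _).isPreconnected (by norm_num) hLG hs]
  exact exp_ne_zero _
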